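/- Let u(x′, x₃) = |x′|^{4/3}(1 + x₃²) on ℝ³ (with x′ ∈ ℝ²). Then u is convex on the cube Q_r = {|x_i| < r/2, i = 1,2,3} for r sufficiently small, u vanishes on the segment {x′ = 0} ∩ Q_r, and hence u is not strictly convex on Q_r. -/
import Mathlib


open Set

/-- The cube `Q_r = {|x_i| < r/2, i = 1,2,3}` in `ℝ² × ℝ`. -/
def pogorelovCube (r : ℝ) : Set (EuclideanSpace ℝ (Fin 2) × ℝ) :=
  {p | |p.1 0| < r / 2 ∧ |p.1 1| < r / 2 ∧ |p.2| < r / 2}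

/-- Pogorelov's function `u(x′, x₃) = |x′|^{4/3}(1 + x₃²)`. -/
noncomputable def pogorelov (p : EuclideanSpace ℝ (Fin 2) × ℝ) : ℝ :=
  ‖p.1‖ ^ ((4 : ℝ) / 3) * (1 + p.2 ^ 2)

set_option maxHeartbeats 1000000 in
/-- The key polynomial inequality behind the supporting-plane inequality for
`f(s,t) = s^{4/3}(1+t²)`, after the substitution `s = A³`, `m = S³`. -/
lemma pogorelov_keypoly (A S t w : ℝ) (hA : 0 ≤ A) (hS : 0 ≤ S)
    (ht : |t| ≤ 1/4) (hw : |w| ≤ 1/4) :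
    4*S*A^3*(1+w^2) + S^4*(6*t*w - 1 - 7*w^2) ≤ 3*A^4*(1+t^2) := by
  obtain ⟨ht1, ht2⟩ := abs_le.mp ht
  obtain ⟨hw1, hw2⟩ := abs_le.mp hw
  have hts : t^2 ≤ 1/16 := by nlinarith
  have hws : w^2 ≤ 1/16 := by nlinarith
  rcases le_or_gt (13*A) (10*S) with hc | hc
  · -- A small compared with S : crude bounds
    have hSA3 : 0 ≤ S*A^3 := mul_nonneg hS (pow_nonneg hA 3)
    have h4 : 4*S*A^3*(1+w^2) ≤ (17/4)*(S*A^3) := by nlinarith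
    have h6 : S^4*(6*t*w - 7*w^2) ≤ (9/112)*S^4 := by
      nlinarith [mul_nonneg (pow_nonneg hS 4) (sq_nonneg (3*t - 7*w)),
        mul_nonneg (pow_nonneg hS 4) (by linarith : (0:ℝ) ≤ 1/16 - t^2)]
    have h5 : (17/4)*(S*A^3) ≤ 3*A^4 + (103/112)*S^4 := by
      nlinarith [mul_nonneg (by linarith : (0:ℝ) ≤ 10*S - 13*A) (pow_nonneg hA 3),
        sq_nonneg (33*A^2 - 16*A*S - 5*S^2), sq_nonneg (10*A - 9*S),
        mul_nonneg hA hS, sq_nonneg A, sq_nonneg S,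
        mul_nonneg (mul_nonneg hA hA) (mul_nonneg hS hS)]
    have h7 : 0 ≤ A^4*t^2 := mul_nonneg (pow_nonneg hA 4) (sq_nonneg t)
    have h8 : 0 ≤ S^4 := pow_nonneg hS 4
    nlinarith [h4, h5, h6, h7, h8]
  · -- A comparable with or larger than S : completing-the-square certificate
    have hA0 : 0 < A := by linarith
    have hH : (0:ℝ) ≤ 13*A - 10*S := by linarith
    have hM : 3*((A+S)*(A^2+S^2))^2 ≤ 17*A^4*(3*A^2 + 2*A*S + S^2) := by
      have f0 := mul_nonneg hH (pow_nonneg hS 5)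
      have f1 := mul_nonneg hH (mul_nonneg hA (pow_nonneg hS 4))
      have f2 := mul_nonneg hH (mul_nonneg (pow_nonneg hA 2) (pow_nonneg hS 3))
      have f3 := mul_nonneg hH (mul_nonneg (pow_nonneg hA 3) (pow_nonneg hS 2))
      have f4 := mul_nonneg hH (mul_nonneg (pow_nonneg hA 4) hS)
      have f5 := mul_nonneg hH (pow_nonneg hA 5)
      have f6 : (0:ℝ) ≤ A^6 := pow_nonneg hA 6
      nlinarith [f0, f1, f2, f3, f4, f5, f6]
    have key : 0 ≤ A^4 * (3*A^4*(1+t^2) - 4*S*A^3*(1+w^2) - S^4*(6*t*w - 1 - 7*w^2)) := by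
      have g1 : (0:ℝ) ≤ (A^4*(t-w) + (A-S)*(A+S)*(A^2+S^2)*w)^2 := sq_nonneg _
      have g2 : (0:ℝ) ≤ (1+w^2) * ((A-S)^2 *
          (17*A^4*(3*A^2 + 2*A*S + S^2) - 3*((A+S)*(A^2+S^2))^2)) :=
        mul_nonneg (by nlinarith) (mul_nonneg (sq_nonneg _) (by linarith))
      have g3 : (0:ℝ) ≤ ((A-S)^2 * ((A+S)*(A^2+S^2))^2) * (1 - 16*w^2) :=
        mul_nonneg (mul_nonneg (sq_nonneg _) (sq_nonneg _)) (by linarith)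
      nlinarith [g1, g2, g3]
    nlinarith [key, pow_pos hA0 4]

/-- Supporting-plane inequality for `f(s,t) = s^{4/3}(1+t²)` at the point `(m,w)`,
valid for `s, m ≥ 0` and `|t|, |w| ≤ 1/4`. -/
lemma pogorelov_subgrad (s m t w : ℝ) (hs : 0 ≤ s) (hm : 0 ≤ m)
    (ht : |t| ≤ 1/4) (hw : |w| ≤ 1/4) :
    m^((4:ℝ)/3)*(1+w^2) + (4/3)*m^((1:ℝ)/3)*(1+w^2)*(s - m)
      + 2*m^((4:ℝ)/3)*w*(t - w) ≤ s^((4:ℝ)/3)*(1+t^2) := by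
  set A := s ^ ((1:ℝ)/3) with hA
  set S := m ^ ((1:ℝ)/3) with hS
  have hA0 : 0 ≤ A := Real.rpow_nonneg hs _
  have hS0 : 0 ≤ S := Real.rpow_nonneg hm _
  have e1 : s^((4:ℝ)/3) = A^4 := by
    rw [hA, ← Real.rpow_natCast (s ^ ((1:ℝ)/3)) 4, ← Real.rpow_mul hs]; norm_num
  have e2 : m^((4:ℝ)/3) = S^4 := by
    rw [hS, ← Real.rpow_natCast (m ^ ((1:ℝ)/3)) 4, ← Real.rpow_mul hm]; norm_num
  have e3 : s = A^3 := by
    rw [hA, ← Real.rpow_natCast (s ^ ((1:ℝ)/3)) 3, ← Real.rpow_mul hs]; norm_num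
  have e4 : m = S^3 := by
    rw [hS, ← Real.rpow_natCast (m ^ ((1:ℝ)/3)) 3, ← Real.rpow_mul hm]; norm_num
  rw [e1, e2]
  nth_rewrite 1 [e3]
  nth_rewrite 1 [e4]
  nlinarith [pogorelov_keypoly A S t w hA0 hS0 ht hw]

set_option maxHeartbeats 1600000 in
/-- Pogorelov's example: for `r` sufficiently small, `u(x′,x₃) = |x′|^{4/3}(1+x₃²)` is convex
on the cube `Q_r`, vanishes on the segment `{x′ = 0} ∩ Q_r`, and hence is not strictly
convex on `Q_r`. -/
theorem pogorelov_convex_not_strictly_convex :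
    ∃ r₀ > (0 : ℝ), ∀ r : ℝ, 0 < r → r ≤ r₀ →
      ConvexOn ℝ (pogorelovCube r) pogorelov ∧
      (∀ t : ℝ, |t| < r / 2 → pogorelov (0, t) = 0) ∧
      ¬ StrictConvexOn ℝ (pogorelovCube r) pogorelov := by
  refine ⟨1/2, by norm_num, fun r hr hr2 => ⟨⟨?_, ?_⟩, ?_, ?_⟩⟩
  · -- convexity of the cube
    intro x hx y hy a b ha hb hab
    obtain ⟨hx1, hx2, hx3⟩ := hx
    obtain ⟨hy1, hy2, hy3⟩ := hy
    have habs : ∀ u v : ℝ, |u| < r/2 → |v| < r/2 → |a*u + b*v| < r/2 := by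
      intro u v hu hv
      have hmem := (convex_Iio (r/2)) (mem_Iio.2 hu) (mem_Iio.2 hv) ha hb hab
      calc |a*u + b*v| ≤ |a*u| + |b*v| := abs_add_le _ _
        _ = a*|u| + b*|v| := by
            rw [abs_mul, abs_mul, abs_of_nonneg ha, abs_of_nonneg hb]
        _ < r/2 := by simpa using hmem
    have e1 : (a • x + b • y).1 0 = a * x.1 0 + b * y.1 0 := rfl
    have e2 : (a • x + b • y).1 1 = a * x.1 1 + b * y.1 1 := rfl
    have e3 : (a • x + b • y).2 = a * x.2 + b * y.2 := rfl
    exact ⟨by rw [e1]; exact habs _ _ hx1 hy1, by rw [e2]; exact habs _ _ hx2 hy2,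
      by rw [e3]; exact habs _ _ hx3 hy3⟩
  · -- the convexity inequality
    intro x hx y hy a b ha hb hab
    obtain rfl : b = 1 - a := by linarith
    set w : ℝ := a * x.2 + (1-a) * y.2 with hwdef
    have hxt : |x.2| ≤ 1/4 := by
      have h := abs_lt.mp hx.2.2; rw [abs_le]; constructor <;> linarith [h.1, h.2]
    have hyt : |y.2| ≤ 1/4 := by
      have h := abs_lt.mp hy.2.2; rw [abs_le]; constructor <;> linarith [h.1, h.2]
    have hwt : |w| ≤ 1/4 := by
      calc |w| ≤ |a * x.2| + |(1-a) * y.2| := abs_add_le _ _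
        _ = a * |x.2| + (1-a) * |y.2| := by
            rw [abs_mul, abs_mul, abs_of_nonneg ha, abs_of_nonneg hb]
        _ ≤ a * (1/4) + (1-a) * (1/4) := by gcongr
        _ = 1/4 := by ring
    set m : ℝ := ‖a • x.1 + (1-a) • y.1‖ with hmdef
    have hm : 0 ≤ m := norm_nonneg _
    have hnorm : m ≤ a * ‖x.1‖ + (1-a) * ‖y.1‖ := by
      calc m ≤ ‖a • x.1‖ + ‖(1-a) • y.1‖ := norm_add_le _ _
        _ = a * ‖x.1‖ + (1-a) * ‖y.1‖ := by
            rw [norm_smul, norm_smul, Real.norm_of_nonneg ha, Real.norm_of_nonneg hb]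
    have I1 := pogorelov_subgrad ‖x.1‖ m x.2 w (norm_nonneg _) hm hxt hwt
    have I2 := pogorelov_subgrad ‖y.1‖ m y.2 w (norm_nonneg _) hm hyt hwt
    have hgoal : pogorelov (a • x + (1-a) • y) = m^((4:ℝ)/3) * (1 + w^2) := rfl
    have hx' : pogorelov x = ‖x.1‖^((4:ℝ)/3) * (1 + x.2^2) := rfl
    have hy' : pogorelov y = ‖y.1‖^((4:ℝ)/3) * (1 + y.2^2) := rfl
    rw [hgoal, hx', hy']
    simp only [smul_eq_mul]
    have j1 := mul_le_mul_of_nonneg_left I1 ha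
    have j2 := mul_le_mul_of_nonneg_left I2 hb
    have j3 : 0 ≤ (4/3) * m^((1:ℝ)/3) * (1+w^2) * (a * ‖x.1‖ + (1-a) * ‖y.1‖ - m) :=
      mul_nonneg (mul_nonneg (mul_nonneg (by norm_num) (Real.rpow_nonneg hm _))
        (by positivity)) (by linarith)
    nlinarith [j1, j2, j3]
  · -- vanishing on the segment
    intro t ht
    have h0 : ‖(0 : EuclideanSpace ℝ (Fin 2))‖ = 0 := norm_zero
    simp [pogorelov, h0, Real.zero_rpow (by norm_num : ((4:ℝ)/3) ≠ 0)]
  · -- not strictly convex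
    intro h
    set p : EuclideanSpace ℝ (Fin 2) × ℝ := (0, -(r/4)) with hp
    set q : EuclideanSpace ℝ (Fin 2) × ℝ := (0, r/4) with hq
    have hzero : ∀ i : Fin 2, |(0 : EuclideanSpace ℝ (Fin 2)) i| < r/2 := by
      intro i; simp; linarith
    have hpmem : p ∈ pogorelovCube r := by
      refine ⟨hzero 0, hzero 1, ?_⟩
      show |-(r/4)| < r/2
      rw [abs_neg, abs_of_nonneg (by linarith)]; linarith
    have hqmem : q ∈ pogorelovCube r := by
      refine ⟨hzero 0, hzero 1, ?_⟩
      show |r/4| < r/2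
      rw [abs_of_nonneg (by linarith)]; linarith
    have hne : p ≠ q := by
      intro hpq
      have := congrArg Prod.snd hpq
      simp [hp, hq] at this
      linarith
    have hlt := h.2 hpmem hqmem hne (by norm_num : (0:ℝ) < 1/2)
      (by norm_num : (0:ℝ) < 1/2) (by norm_num)
    have hval : ∀ z : EuclideanSpace ℝ (Fin 2) × ℝ, z.1 = 0 → pogorelov z = 0 := by
      intro z hz
      simp [pogorelov, hz, Real.zero_rpow (by norm_num : ((4:ℝ)/3) ≠ 0)]
    rw [hval p rfl, hval q rfl, hval _ (by simp [hp, hq])] at hlt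
    norm_num at hlt
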